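/- Let n ∈ ℕ, let W = {w_1, …, w_n} and M = {m_1, …, m_n} be disjoint sets with designated woman w = w_1, and let w' and m' be two further participants distinct from all of these. Given a profile P_W of partial preference lists for W over M and a profile P_M for M over W, define partial preference lists on W ∪ {w'} over M ∪ {m'}: the list of w is her list in P_W followed by m'; the list of every other woman of W is unchanged; the list of w' is empty; the list of every man of M is unchanged (w' absent); the list of m' consists solely of w. Then w is single in some marriage between W and M that is stable with respect to P_W and P_M if and only if m' is married in every marriage between W ∪ {w'} and M ∪ {m'} that is stable with respect to the constructed preference lists. -/

import Mathlib

/-- `listPref l a b`: in the (possibly partial) preference list `l`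
(most-preferred first), `a` is preferred over `b`: `a` is on the list, and
either `b` is not on the list or `a` precedes `b` on it. -/
def listPref {α : Type} [DecidableEq α] (l : List α) (a b : α) : Prop :=
  a ∈ l ∧ (b ∈ l → l.idxOf a < l.idxOf b)

/-- A marriage between (a subset of) the women `Fin nw` and (a subset of) the
men `Fin nm`: `μ i = some j` means woman `i` is married to man `j`, and
`μ i = none` means woman `i` is single; no two women share a husband. -/
def IsMarriage {nw nm : ℕ} (μ : Fin nw → Option (Fin nm)) : Prop :=
  ∀ i i' j, μ i = some j → μ i' = some j → i = i'

/-- Stability of a marriage `μ` with respect to (possibly partial) preference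
lists `wL` (women's lists of men) and `mL` (men's lists of women): every married
participant is married to someone on their own list, and there is no blocking
pair, i.e. no pair `(i, j)`, with `j` on `i`'s list and `i` on `j`'s list, such
that woman `i` is single or prefers `j` over her spouse, and man `j` is single
or prefers `i` over his spouse. -/
def StableL {nw nm : ℕ} (wL : Fin nw → List (Fin nm)) (mL : Fin nm → List (Fin nw))
    (μ : Fin nw → Option (Fin nm)) : Prop :=
  (∀ i j, μ i = some j → j ∈ wL i ∧ i ∈ mL j) ∧
  ¬∃ (i : Fin nw) (j : Fin nm),
      j ∈ wL i ∧ i ∈ mL j ∧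
      (∀ j', μ i = some j' → listPref (wL i) j j') ∧
      (∀ i', μ i' = some j → listPref (mL j) i i')

/-- Extension of the women's profile `wL` on `Fin n` to `Fin (n + 1)`: woman
`w = w_1` (index `0`, requiring `0 < n`) gets her original list followed by `m'`
(index `n`, i.e. `Fin.last n`); every other original woman keeps her list
unchanged; the extra woman `w'` (index `n`) has an empty list. -/
def addWL (n : ℕ) (wL : Fin n → List (Fin n)) : Fin (n + 1) → List (Fin (n + 1)) :=
  fun i =>
    if h : i.val < n then
      if i.val = 0 then ((wL ⟨i.val, h⟩).map Fin.castSucc) ++ [Fin.last n]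
      else (wL ⟨i.val, h⟩).map Fin.castSucc
    else []

/-- Extension of the men's profile `mL` on `Fin n` to `Fin (n + 1)`: every
original man keeps his list unchanged (`w'` absent); the extra man `m'`
(index `n`) lists solely `w = w_1` (index `0`). -/
def addML (n : ℕ) (mL : Fin n → List (Fin n)) : Fin (n + 1) → List (Fin (n + 1)) :=
  fun j =>
    if h : j.val < n then (mL ⟨j.val, h⟩).map Fin.castSucc
    else [(0 : Fin (n + 1))]

/-!
Restricting a stable marriage of the extended instance to `W` and `M` (so that a `w` married to
`m'` becomes single) gives a stable marriage of the original one. If `w` is single in some stable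
marriage but `m'` is single in a stable `μ'`, then `w` is married in `μ'` to a man of `M`, since
otherwise `(w, m')` blocks; so `w` is married in the restriction of `μ'`, contradicting the rural
hospitals theorem (the same women are single in all stable marriages). Conversely, a stable `μ'`
exists; if `m'` is married in it, then to `w`, and its restriction leaves `w` single.
-/

section ListPref

variable {α : Type} [DecidableEq α] {l : List α} {a b c : α}

theorem listPref_irrefl (l : List α) (a : α) : ¬listPref l a a :=
  fun h => lt_irrefl _ (h.2 h.1)

theorem listPref.asymm (h : listPref l a b) : ¬listPref l b a :=
  fun h' => lt_asymm (h.2 h'.1) (h'.2 h.1)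

theorem listPref.trans (hab : listPref l a b) (hbc : listPref l b c) : listPref l a c :=
  ⟨hab.1, fun hc => (hab.2 hbc.1).trans (hbc.2 hc)⟩

theorem listPref_of_not_listPref (ha : a ∈ l) (hb : b ∈ l) (hne : a ≠ b)
    (h : ¬listPref l a b) : listPref l b a := by
  have hlt : ¬l.idxOf a < l.idxOf b := fun hlt => h ⟨ha, fun _ => hlt⟩
  have hidx : l.idxOf a ≠ l.idxOf b := fun e => hne ((List.idxOf_inj ha).1 e)
  exact ⟨hb, fun _ => by omega⟩

theorem listPref_cons_iff {x : α} :
    listPref (x :: l) a b ↔ (x = a ∧ b ≠ a) ∨ (x ≠ a ∧ x ≠ b ∧ listPref l a b) := by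
  unfold listPref
  by_cases hxa : x = a
  · subst hxa
    by_cases hb : b = x
    · subst hb; simp
    · simp [List.idxOf_cons_ne _ (Ne.symm hb), hb]
  · by_cases hxb : x = b
    · subst hxb; simp [List.idxOf_cons_ne _ hxa, hxa]
    · simp [List.idxOf_cons_ne _ hxa, List.idxOf_cons_ne _ hxb, hxa, hxb, Ne.symm hxa, Ne.symm hxb]

theorem listPref.filter {p : α → Bool} (h : listPref l a b) (ha : p a) :
    listPref (l.filter p) a b := by
  induction l with
  | nil => exact absurd h.1 List.not_mem_nil
  | cons x l ih =>
    rcases listPref_cons_iff.1 h with ⟨rfl, hb⟩ | ⟨hxa, hxb, h⟩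
    · rw [List.filter_cons_of_pos ha, listPref_cons_iff]
      exact Or.inl ⟨rfl, hb⟩
    · rw [List.filter_cons]
      split
      · exact listPref_cons_iff.2 (Or.inr ⟨hxa, hxb, ih h⟩)
      · exact ih h

theorem listPref_cons_head (l : List α) (h : b ≠ a) : listPref (a :: l) a b :=
  listPref_cons_iff.2 (Or.inl ⟨rfl, h⟩)

theorem not_listPref_head (l : List α) (a b : α) : ¬listPref (b :: l) a b := by
  rintro ⟨-, h⟩
  simp at h

theorem listPref.map {β : Type} [DecidableEq β] {f : α → β} (hf : Function.Injective f)
    (h : listPref l a b) : listPref (l.map f) (f a) (f b) := by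
  induction l with
  | nil => exact absurd h.1 List.not_mem_nil
  | cons x l ih =>
    rw [List.map_cons, listPref_cons_iff]
    rcases listPref_cons_iff.1 h with ⟨rfl, hb⟩ | ⟨hxa, hxb, h⟩
    · exact Or.inl ⟨rfl, hf.ne hb⟩
    · exact Or.inr ⟨hf.ne hxa, hf.ne hxb, ih h⟩

theorem listPref.append_right (l' : List α) (h : listPref l a b) : listPref (l ++ l') a b := by
  induction l with
  | nil => exact absurd h.1 List.not_mem_nil
  | cons x l ih =>
    rw [List.cons_append, listPref_cons_iff]
    rcases listPref_cons_iff.1 h with ⟨rfl, hb⟩ | ⟨hxa, hxb, h⟩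
    · exact Or.inl ⟨rfl, hb⟩
    · exact Or.inr ⟨hxa, hxb, ih h⟩

end ListPref

section Stable

variable {nw nm : ℕ} {wL : Fin nw → List (Fin nm)} {mL : Fin nm → List (Fin nw)}
  {μ ν : Fin nw → Option (Fin nm)}

theorem StableL.exists_preferred_wife (hμ : StableL wL mL μ) (hν : IsMarriage ν)
    (hνs : StableL wL mL ν) {i : Fin nw} {m : Fin nm} (him : ν i = some m)
    (hpref : ∀ j, μ i = some j → listPref (wL i) m j) :
    ∃ i', μ i' = some m ∧ ∀ i'', ν i'' = some m → listPref (mL m) i' i'' := by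
  obtain ⟨hmi, him'⟩ := hνs.1 i m him
  have : ¬∀ i', μ i' = some m → listPref (mL m) i i' :=
    fun h => hμ.2 ⟨i, m, hmi, him', hpref, h⟩
  push Not at this
  obtain ⟨i', hi'm, hnot⟩ := this
  have hne : i ≠ i' := by
    rintro rfl
    exact listPref_irrefl _ _ (hpref m hi'm)
  refine ⟨i', hi'm, fun i'' hi'' => ?_⟩
  rw [hν i'' i m hi'' him]
  exact listPref_of_not_listPref him' (hμ.1 i' m hi'm).2 hne hnot

theorem StableL.exists_preferred_husband (hμ : StableL wL mL μ) (hνs : StableL wL mL ν)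
    {i : Fin nw} {j : Fin nm} (hij : μ i = some j)
    (hpref : ∀ i', ν i' = some j → listPref (mL j) i i') :
    ∃ m, ν i = some m ∧ ∀ j', μ i = some j' → listPref (wL i) m j' := by
  obtain ⟨hji, hij'⟩ := hμ.1 i j hij
  have : ¬∀ m, ν i = some m → listPref (wL i) j m :=
    fun h => hνs.2 ⟨i, j, hji, hij', h, hpref⟩
  push Not at this
  obtain ⟨m, him, hnot⟩ := this
  have hne : j ≠ m := by
    rintro rfl
    exact listPref_irrefl _ _ (hpref i him)
  refine ⟨m, him, fun j' hj' => ?_⟩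
  rw [Option.some.inj (hj'.symm.trans hij)]
  exact listPref_of_not_listPref hji (hνs.1 i m him).1 hne hnot

/-- Rural hospitals theorem. The women preferring `ν` to `μ` are sent injectively by `ν` to men
preferring `μ` to `ν`, whose `μ`-wives again prefer `ν`; so all of them are married in `μ`. -/
theorem StableL.eq_none_of_eq_none (hμ : StableL wL mL μ) (hν : IsMarriage ν)
    (hνs : StableL wL mL ν) {i : Fin nw} (hi : μ i = none) : ν i = none := by
  classical
  set P := Finset.univ.filter fun i => ∃ m, ν i = some m ∧ ∀ j, μ i = some j → listPref (wL i) m j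
  set Q := Finset.univ.filter fun i => ∃ j, μ i = some j ∧ ∀ i', ν i' = some j → listPref (mL j) i i'
  have hQP : Q ⊆ P := by
    intro i' hi'
    obtain ⟨j, hj, hpref⟩ := (Finset.mem_filter.1 hi').2
    exact Finset.mem_filter.2 ⟨Finset.mem_univ _, hμ.exists_preferred_husband hνs hj hpref⟩
  have hPQ : P.image ν ⊆ Q.image μ := by
    intro o ho
    obtain ⟨i', hi', rfl⟩ := Finset.mem_image.1 ho
    obtain ⟨m, hm, hpref⟩ := (Finset.mem_filter.1 hi').2
    obtain ⟨i'', hi''m, hpref'⟩ := hμ.exists_preferred_wife hν hνs hm hpref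
    exact Finset.mem_image.2 ⟨i'', Finset.mem_filter.2 ⟨Finset.mem_univ _, m, hi''m, hpref'⟩,
      hi''m.trans hm.symm⟩
  have hinj : Set.InjOn ν P := by
    intro a ha b _ hab
    obtain ⟨m, hm, -⟩ := (Finset.mem_filter.1 ha).2
    exact hν a b m hm (hab ▸ hm)
  have hcard : P.card ≤ Q.card := calc
    P.card = (P.image ν).card := (Finset.card_image_of_injOn hinj).symm
    _ ≤ (Q.image μ).card := Finset.card_le_card hPQ
    _ ≤ Q.card := Finset.card_image_le
  by_contra hνi
  obtain ⟨m, hm⟩ := Option.ne_none_iff_exists'.1 hνi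
  have hiP : i ∈ P := Finset.mem_filter.2 ⟨Finset.mem_univ _, m, hm, by simp [hi]⟩
  rw [← Finset.eq_of_subset_of_card_le hQP hcard] at hiP
  obtain ⟨j, hj, -⟩ := (Finset.mem_filter.1 hiP).2
  simp [hi] at hj

end Stable

section Existence

variable {nw nm : ℕ} {wL : Fin nw → List (Fin nm)} {mL : Fin nm → List (Fin nw)}
  {μ : Fin nw → Option (Fin nm)}

theorem StableL.of_update_filter {b : Fin nw} {j : Fin nm}
    (hbj : b ∉ mL j ∨ ∃ a, (wL a).head? = some j ∧ listPref (mL j) a b)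
    (hμ : StableL (Function.update wL b ((wL b).filter (· ≠ j))) mL μ) :
    StableL wL mL μ := by
  set wL' := Function.update wL b ((wL b).filter (· ≠ j))
  have hsub : ∀ i, wL' i ⊆ wL i := by
    intro i
    by_cases hi : i = b
    · subst hi; simp [wL']
    · simp [wL', hi]
  refine ⟨fun i k hik => ⟨hsub i (hμ.1 i k hik).1, (hμ.1 i k hik).2⟩, ?_⟩
  rintro ⟨c, d, hdc, hcd, hwoman, hman⟩
  by_cases hcd_bj : c = b ∧ d = j
  · obtain ⟨rfl, rfl⟩ := hcd_bj
    obtain ⟨a, ha, hab⟩ := hbj.resolve_left (not_not.2 hcd)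
    have hab_ne : a ≠ c := fun e => listPref_irrefl _ _ (e ▸ hab)
    obtain ⟨t, ht⟩ := List.head?_eq_some_iff.1 ha
    have hwL'a : wL' a = d :: t := by simp [wL', hab_ne, ht]
    -- `a` heads her list with `d`, and `d` ranks her above `c` and hence above his partner.
    refine hμ.2 ⟨a, d, hwL'a ▸ List.mem_cons_self, hab.1, fun k hak => ?_,
      fun i' hi' => hab.trans (hman i' hi')⟩
    rw [hwL'a]
    refine listPref_cons_head t fun hkd => ?_
    exact hab.asymm (hman a (hkd ▸ hak))
  · by_cases hc : c = b
    · subst hc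
      have hdj : d ≠ j := fun h => hcd_bj ⟨rfl, h⟩
      refine hμ.2 ⟨c, d, by simp [wL', hdc, hdj], hcd, fun k hck => ?_, hman⟩
      simpa [wL'] using (hwoman k hck).filter (p := (· ≠ j)) (by simpa using hdj)
    · refine hμ.2 ⟨c, d, by simpa [wL', hc] using hdc, hcd, fun k hck => ?_, hman⟩
      simpa [wL', hc] using hwoman k hck

theorem stableL_head? (hacc : ∀ i j, (wL i).head? = some j → i ∈ mL j) :
    StableL wL mL fun i => (wL i).head? := by
  refine ⟨fun i j hij => ⟨List.mem_of_mem_head? hij, hacc i j hij⟩, ?_⟩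
  rintro ⟨i, j, hji, -, hwoman, -⟩
  obtain ⟨k, t, ht⟩ := List.exists_cons_of_ne_nil (List.ne_nil_of_mem hji)
  have := hwoman k (by simp [ht])
  rw [ht] at this
  exact not_listPref_head t j k this

theorem isMarriage_head? (hacc : ∀ i j, (wL i).head? = some j → i ∈ mL j)
    (hfirst : ∀ a b j, (wL a).head? = some j → (wL b).head? = some j → ¬listPref (mL j) a b) :
    IsMarriage fun i => (wL i).head? := by
  intro a b j ha hb
  by_contra hab
  exact hfirst b a j hb ha
    (listPref_of_not_listPref (hacc a j ha) (hacc b j hb) hab (hfirst a b j ha hb))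

/-- Gale–Shapley by deletion: a man can be struck from the list of a woman he finds unacceptable,
or whom he likes less than another woman who ranks him first, without losing stable marriages. -/
theorem exists_isMarriage_stableL (wL : Fin nw → List (Fin nm)) (mL : Fin nm → List (Fin nw)) :
    ∃ μ, IsMarriage μ ∧ StableL wL mL μ := by
  induction hN : ∑ i, (wL i).length using Nat.strong_induction_on generalizing wL with
  | _ N ih =>
  by_cases hdel : ∃ b j, j ∈ wL b ∧ (b ∉ mL j ∨ ∃ a, (wL a).head? = some j ∧ listPref (mL j) a b)
  · obtain ⟨b, j, hjb, hbj⟩ := hdel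
    have hlt : ∑ i, (Function.update wL b ((wL b).filter (· ≠ j)) i).length < N := by
      rw [← hN]
      refine Finset.sum_lt_sum (fun i _ => ?_) ⟨b, Finset.mem_univ _, ?_⟩
      · by_cases hi : i = b
        · subst hi; simpa using List.length_filter_le _ _
        · simp [hi]
      · simpa using (List.length_filter_lt_length_iff_exists (p := fun k => decide (k ≠ j))).2
          ⟨j, hjb, by simp⟩
    obtain ⟨μ, hμ, hμs⟩ := ih _ hlt _ rfl
    exact ⟨μ, hμ, hμs.of_update_filter hbj⟩
  · push Not at hdel
    have hacc : ∀ i j, (wL i).head? = some j → i ∈ mL j :=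
      fun i j h => (hdel i j (List.mem_of_mem_head? h)).1
    exact ⟨_, isMarriage_head? hacc fun a b j ha hb hab =>
      (hdel b j (List.mem_of_mem_head? hb)).2 a ha hab, stableL_head? hacc⟩

end Existence

section Extension

variable {n : ℕ} {wL : Fin n → List (Fin n)} {mL : Fin n → List (Fin n)}

theorem addWL_castSucc (i : Fin n) :
    addWL n wL i.castSucc =
      (wL i).map Fin.castSucc ++ if (i : ℕ) = 0 then [Fin.last n] else [] := by
  simp only [addWL, Fin.val_castSucc, i.isLt, dite_true, Fin.eta]
  split_ifs <;> simp

theorem addWL_last : addWL n wL (Fin.last n) = [] := by simp [addWL]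

theorem addML_castSucc (j : Fin n) : addML n mL j.castSucc = (mL j).map Fin.castSucc := by
  simp [addML]

theorem addML_last : addML n mL (Fin.last n) = [0] := by simp [addML]

theorem castSucc_mem_addWL {i j : Fin n} : j.castSucc ∈ addWL n wL i.castSucc ↔ j ∈ wL i := by
  simp [addWL_castSucc, (Fin.castSucc_lt_last j).ne]

theorem last_mem_addWL {i : Fin n} : Fin.last n ∈ addWL n wL i.castSucc ↔ (i : ℕ) = 0 := by
  simp [addWL_castSucc, (Fin.castSucc_lt_last _).ne]

theorem castSucc_mem_addML {i j : Fin n} : i.castSucc ∈ addML n mL j.castSucc ↔ i ∈ mL j := by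
  simp [addML_castSucc]

theorem mem_addML_last {i : Fin (n + 1)} : i ∈ addML n mL (Fin.last n) ↔ i = 0 := by
  simp [addML_last]

theorem listPref.addWL {i j k : Fin n} (h : listPref (wL i) j k) :
    listPref (addWL n wL i.castSucc) j.castSucc k.castSucc := by
  rw [addWL_castSucc]
  exact (h.map (Fin.castSucc_injective n)).append_right _

theorem listPref_addWL_last {i j : Fin n} (hj : j ∈ wL i) :
    listPref (addWL n wL i.castSucc) j.castSucc (Fin.last n) := by
  rw [addWL_castSucc]
  have hlast : Fin.last n ∉ (wL i).map Fin.castSucc := by simp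
  exact listPref.append_right _ ⟨List.mem_map_of_mem hj, fun h => absurd h hlast⟩

theorem listPref.addML {i i' j : Fin n} (h : listPref (mL j) i i') :
    listPref (addML n mL j.castSucc) i.castSucc i'.castSucc := by
  rw [addML_castSucc]
  exact h.map (Fin.castSucc_injective n)

/-- Forget `w'` and `m'`; a woman married to `m'` becomes single. -/
def restrictLast (μ : Fin (n + 1) → Option (Fin (n + 1))) : Fin n → Option (Fin n) :=
  fun i => (μ i.castSucc).bind (Fin.lastCases none some)

theorem restrictLast_eq_some {μ : Fin (n + 1) → Option (Fin (n + 1))} {i j : Fin n} :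
    restrictLast μ i = some j ↔ μ i.castSucc = some j.castSucc := by
  unfold restrictLast
  cases h : μ i.castSucc with
  | none => simp
  | some k => induction k using Fin.lastCases <;> simp [(Fin.castSucc_lt_last _).ne']

theorem restrictLast_eq_none {μ : Fin (n + 1) → Option (Fin (n + 1))} {i : Fin n}
    (h : μ i.castSucc = some (Fin.last n)) : restrictLast μ i = none := by
  simp [restrictLast, h]

theorem IsMarriage.restrictLast {μ : Fin (n + 1) → Option (Fin (n + 1))} (hμ : IsMarriage μ) :
    IsMarriage (restrictLast μ) := fun _ _ _ hi hi' =>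
  Fin.castSucc_injective n (hμ _ _ _ (restrictLast_eq_some.1 hi) (restrictLast_eq_some.1 hi'))

theorem StableL.restrictLast {μ : Fin (n + 1) → Option (Fin (n + 1))}
    (hμ : StableL (addWL n wL) (addML n mL) μ) : StableL wL mL (restrictLast μ) := by
  refine ⟨fun i j hij => ?_, ?_⟩
  · obtain ⟨hji, hij'⟩ := hμ.1 _ _ (restrictLast_eq_some.1 hij)
    exact ⟨castSucc_mem_addWL.1 hji, castSucc_mem_addML.1 hij'⟩
  rintro ⟨i, j, hji, hij, hwoman, hman⟩
  refine hμ.2 ⟨i.castSucc, j.castSucc, castSucc_mem_addWL.2 hji, castSucc_mem_addML.2 hij,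
    fun k hk => ?_, fun i' hi' => ?_⟩
  · rcases Fin.eq_castSucc_or_eq_last k with ⟨k, rfl⟩ | rfl
    · exact (hwoman k (restrictLast_eq_some.2 hk)).addWL
    · exact listPref_addWL_last hji
  · rcases Fin.eq_castSucc_or_eq_last i' with ⟨i', rfl⟩ | rfl
    · exact (hman i' (restrictLast_eq_some.2 hi')).addML
    · simpa [addWL_last] using (hμ.1 _ _ hi').1

/-- Otherwise `(w, m')` blocks `μ`. -/
theorem StableL.exists_castSucc_of_last_single {μ : Fin (n + 1) → Option (Fin (n + 1))}
    (hμ : StableL (addWL n wL) (addML n mL) μ) (hlast : ∀ i, μ i ≠ some (Fin.last n))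
    {i : Fin n} (hi : (i : ℕ) = 0) : ∃ j : Fin n, μ i.castSucc = some j.castSucc := by
  by_contra! hno
  refine hμ.2 ⟨i.castSucc, Fin.last n, last_mem_addWL.2 hi, mem_addML_last.2 (Fin.ext hi),
    fun k hk => ?_, fun i' hi' => absurd hi' (hlast i')⟩
  rcases Fin.eq_castSucc_or_eq_last k with ⟨k, rfl⟩ | rfl
  · exact absurd hk (hno k)
  · exact absurd hk (hlast _)

end Extension

theorem single_iff_prime_always_married_general (n : ℕ) (hn : 0 < n)
    (wL : Fin n → List (Fin n)) (mL : Fin n → List (Fin n)) :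
    (∃ μ : Fin n → Option (Fin n),
        IsMarriage μ ∧ StableL wL mL μ ∧ μ ⟨0, hn⟩ = none) ↔
      (∀ μ' : Fin (n + 1) → Option (Fin (n + 1)),
        IsMarriage μ' → StableL (addWL n wL) (addML n mL) μ' →
        ∃ i, μ' i = some (Fin.last n)) := by
  constructor
  · rintro ⟨μ, -, hμ, hμw⟩ μ' hμ'm hμ'
    by_contra! hlast
    obtain ⟨j, hj⟩ := hμ'.exists_castSucc_of_last_single hlast (i := ⟨0, hn⟩) rfl
    have hμ'w := hμ.eq_none_of_eq_none hμ'm.restrictLast hμ'.restrictLast hμw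
    simp [restrictLast_eq_some.2 hj] at hμ'w
  · intro hall
    obtain ⟨μ', hμ'm, hμ'⟩ := exists_isMarriage_stableL (addWL n wL) (addML n mL)
    obtain ⟨i, hi⟩ := hall μ' hμ'm hμ'
    have hi0 : i = (⟨0, hn⟩ : Fin n).castSucc := mem_addML_last.1 (hμ'.1 i _ hi).2
    exact ⟨restrictLast μ', hμ'm.restrictLast, hμ'.restrictLast, restrictLast_eq_none (hi0 ▸ hi)⟩

/-- The woman `w = w_1` is single in some marriage between `W` and `M` that is
stable with respect to the (possibly partial, duplicate-free) profiles `wL`, `mL`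
if and only if the extra man `m'` is married in every marriage between
`W ∪ {w'}` and `M ∪ {m'}` that is stable with respect to the constructed
preference lists. -/
theorem single_iff_prime_always_married (n : ℕ) (hn : 0 < n)
    (wL : Fin n → List (Fin n)) (mL : Fin n → List (Fin n))
    (hw : ∀ i, (wL i).Nodup) (hm : ∀ j, (mL j).Nodup) :
    (∃ μ : Fin n → Option (Fin n),
        IsMarriage μ ∧ StableL wL mL μ ∧ μ ⟨0, hn⟩ = none) ↔
      (∀ μ' : Fin (n + 1) → Option (Fin (n + 1)),
        IsMarriage μ' → StableL (addWL n wL) (addML n mL) μ' →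
        ∃ i, μ' i = some (Fin.last n)) :=
  single_iff_prime_always_married_general n hn wL mL
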